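/- For every integer n ≥ 2, the large rank of the additive semigroup A^+(B_n) is r5(A^+(B_n)) = (n!)·n² + n² + n⁴ − n + 3. -/

import Mathlib

/-- The Brandt semigroup `B_n`, modeled as `Option (Fin n × Fin n)` where
`none` plays the role of the (two-sided) zero element `ϑ`. -/
def Brandt (n : ℕ) : Type := Option (Fin n × Fin n)

instance (n : ℕ) : DecidableEq (Brandt n) :=
  inferInstanceAs (DecidableEq (Option (Fin n × Fin n)))

instance (n : ℕ) : Fintype (Brandt n) :=
  inferInstanceAs (Fintype (Option (Fin n × Fin n)))

namespace Brandt

/-- The zero element `ϑ` of `B_n`. -/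
def theta (n : ℕ) : Brandt n := none

/-- The element `(i, j)` of `B_n`. -/
def pair {n : ℕ} (i j : Fin n) : Brandt n := some (i, j)

/-- The addition of the Brandt semigroup:
`(i,j) + (k,l) = (i,l)` if `j = k` and `ϑ` otherwise; `ϑ` is absorbing. -/
def add {n : ℕ} : Option (Fin n × Fin n) → Option (Fin n × Fin n) → Option (Fin n × Fin n)
  | some (i, j), some (k, l) => if j = k then some (i, l) else none
  | _, _ => none

instance (n : ℕ) : Add (Brandt n) := ⟨fun a b => Brandt.add a b⟩

end Brandt

/-- `M(B_n)`: all self-maps of `B_n`, with pointwise addition. -/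
abbrev MB (n : ℕ) := Brandt n → Brandt n

/-- `g` is an endomorphism of `(B_n, +)`. -/
def IsEndo {n : ℕ} (g : MB n) : Prop := ∀ a b : Brandt n, g (a + b) = g a + g b

/-- `g` is an automorphism of `(B_n, +)`. -/
def IsAuto {n : ℕ} (g : MB n) : Prop := IsEndo g ∧ Function.Bijective g

/-- The constant map `ξ_c` on `B_n` with value `c`. -/
def xi {n : ℕ} (c : Brandt n) : MB n := fun _ => c

/-- `C_{B_n}`, the set of all constant maps on `B_n`. -/
def ConstMaps (n : ℕ) : Set (MB n) := {f | ∃ c : Brandt n, f = xi c}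

/-- `f` is an affine map: a sum of an endomorphism and a constant map. -/
def IsAffine {n : ℕ} (f : MB n) : Prop := ∃ g c, IsEndo g ∧ f = g + xi c

/-- `A^+(B_n)`: the subsemigroup of `(M(B_n), +)` generated by the affine maps. -/
def Aplus (n : ℕ) : AddSubsemigroup (MB n) := AddSubsemigroup.closure {f | IsAffine f}

/-- `A^+(B_n)` as a set of maps. -/
def AplusSet (n : ℕ) : Set (MB n) := (Aplus n : Set (MB n))

/-- The support of `f`: the set of elements not mapped to `ϑ`. -/
def supp {n : ℕ} (f : MB n) : Set (Brandt n) := {a | f a ≠ Brandt.theta n}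

/-- `X_k`: the set of `k`-support elements of `X`. -/
def supportPart {n : ℕ} (X : Set (MB n)) (k : ℕ) : Set (MB n) :=
  {f ∈ X | (supp f).ncard = k}

/-- A subset `U` of an additive semigroup is independent if no element of `U`
lies in the subsemigroup generated by the remaining elements of `U`. -/
def IndepSet {β : Type*} [Add β] (U : Set β) : Prop :=
  ∀ a ∈ U, a ∉ AddSubsemigroup.closure (U \ {a})

/-- The `n`-support map `(p, q; σ)`, sending `(i, p)` to `(iσ, q)` and
everything else to `ϑ`. -/
def nMap {n : ℕ} (p q : Fin n) (σ : Equiv.Perm (Fin n)) : MB n := fun a =>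
  Option.elim (α := Fin n × Fin n) a (Brandt.theta n)
    (fun x => if x.2 = p then Brandt.pair (σ x.1) q else Brandt.theta n)

/-- The singleton support map `⟨(k, l), α⟩`, sending `(k, l)` to `α` and
everything else to `ϑ`. -/
def sMap {n : ℕ} (k l : Fin n) (α : Brandt n) : MB n :=
  fun a => if a = Brandt.pair k l then α else Brandt.theta n

/-- The set `S = {ξ_(i, i+1) : i ∈ [n-1]} ∪ {ξ_(n, 1)}`, i.e. the constant maps
`ξ_(i, i+1)` where the successor is taken cyclically in `[n]`. -/
def setS (n : ℕ) : Set (MB n) := {f | ∃ i : Fin n, f = xi (Brandt.pair i (finRotate n i))}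

/-- The set `T = {g + h : g ∈ Aut(B_n), h ∈ S}`. -/
def setT (n : ℕ) : Set (MB n) := {f | ∃ g h, IsAuto g ∧ h ∈ setS n ∧ f = g + h}
section Aux

open Brandt

variable {n : ℕ}

lemma theta_add (a : Brandt n) : theta n + a = theta n := by
  show Brandt.add none a = none
  cases a with
  | none => rfl
  | some x => rfl

lemma add_theta (a : Brandt n) : a + theta n = theta n := by
  show Brandt.add a none = none
  cases a with
  | none => rfl
  | some x => obtain ⟨i, j⟩ := x; rfl

lemma pair_add_pair (i j k l : Fin n) :
    pair i j + pair k l = if j = k then pair i l else theta n := rfl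

lemma pair_injective : Function.Injective (fun x : Fin n × Fin n => pair x.1 x.2) := by
  intro x y h
  exact Option.some_injective _ h

lemma pair_ne_theta (i j : Fin n) : pair i j ≠ theta n := by
  exact Option.some_ne_none _

lemma MB_add_apply (f g : MB n) (a : Brandt n) : (f + g) a = f a + g a := rfl

lemma xi_apply (c : Brandt n) (a : Brandt n) : xi c a = c := rfl

lemma xi_add_xi (c d : Brandt n) : (xi c + xi d : MB n) = xi (c + d) := rfl

lemma xi_injective : Function.Injective (xi : Brandt n → MB n) := by
  intro c d h
  exact congrFun h (theta n)

lemma add_sMap (f : MB n) (k l : Fin n) (α : Brandt n) :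
    f + sMap k l α = sMap k l (f (pair k l) + α) := by
  funext a
  show f a + sMap k l α a = _
  unfold sMap
  split_ifs with h
  · subst h; rfl
  · exact add_theta _

lemma sMap_add (f : MB n) (k l : Fin n) (α : Brandt n) :
    sMap k l α + f = sMap k l (α + f (pair k l)) := by
  funext a
  show sMap k l α a + f a = _
  unfold sMap
  split_ifs with h
  · subst h; rfl
  · exact theta_add _

lemma sMap_theta (k l : Fin n) : sMap k l (theta n) = xi (theta n) := by
  funext a
  unfold sMap xi
  split_ifs <;> rfl

lemma add_xi_theta (f : MB n) : f + xi (theta n) = xi (theta n) := by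
  funext a
  exact add_theta _

lemma xi_theta_add (f : MB n) : xi (theta n) + f = xi (theta n) := by
  funext a
  exact theta_add _

lemma nMap_apply_pair (p q : Fin n) (σ : Equiv.Perm (Fin n)) (i j : Fin n) :
    nMap p q σ (pair i j) = if j = p then pair (σ i) q else theta n := rfl

lemma nMap_apply_theta (p q : Fin n) (σ : Equiv.Perm (Fin n)) :
    nMap p q σ (theta n) = theta n := rfl

lemma sMap_apply_theta (k l : Fin n) (α : Brandt n) :
    sMap k l α (theta n) = theta n := by
  unfold sMap
  rw [if_neg]
  exact fun h => (pair_ne_theta k l) h.symm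

lemma pair_eq_pair {i j k l : Fin n} (h : pair i j = pair (n := n) k l) : i = k ∧ j = l := by
  have : (i, j) = (k, l) := Option.some_injective _ h
  exact Prod.mk.injEq .. ▸ this

lemma nMap_add_xi (p q u v : Fin n) (σ : Equiv.Perm (Fin n)) :
    nMap p q σ + xi (pair u v) = if q = u then nMap p v σ else xi (theta n) := by
  by_cases h2 : q = u
  · subst h2
    rw [if_pos rfl]
    funext a
    cases a with
    | none => show theta n + pair q v = theta n; exact theta_add _
    | some x =>
      obtain ⟨i, j⟩ := x
      show nMap p q σ (pair i j) + pair q v = nMap p v σ (pair i j)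
      rw [nMap_apply_pair, nMap_apply_pair]
      by_cases h1 : j = p
      · rw [if_pos h1, if_pos h1, pair_add_pair, if_pos rfl]
      · rw [if_neg h1, if_neg h1, theta_add]
  · rw [if_neg h2]
    funext a
    cases a with
    | none => show theta n + pair u v = theta n; exact theta_add _
    | some x =>
      obtain ⟨i, j⟩ := x
      show nMap p q σ (pair i j) + pair u v = theta n
      rw [nMap_apply_pair]
      by_cases h1 : j = p
      · rw [if_pos h1, pair_add_pair, if_neg h2]
      · rw [if_neg h1, theta_add]

lemma sMap_apply_pair (k l : Fin n) (α : Brandt n) (i j : Fin n) :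
    sMap k l α (pair i j) = if pair (n := n) i j = pair k l then α else theta n := rfl

lemma xi_add_nMap (u v p q : Fin n) (σ : Equiv.Perm (Fin n)) :
    xi (pair u v) + nMap p q σ = sMap (σ.symm v) p (pair u q) := by
  funext a
  cases a with
  | none =>
    show pair u v + theta n = sMap (σ.symm v) p (pair u q) (theta n)
    rw [add_theta, sMap_apply_theta]
  | some x =>
    obtain ⟨i, j⟩ := x
    show pair u v + nMap p q σ (pair i j) = sMap (σ.symm v) p (pair u q) (pair i j)
    rw [nMap_apply_pair, sMap_apply_pair]
    by_cases h1 : j = p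
    · subst h1
      rw [if_pos rfl, pair_add_pair]
      by_cases h3 : v = σ i
      · have hi : i = σ.symm v := by rw [h3, Equiv.symm_apply_apply]
        rw [if_pos h3, if_pos (by rw [hi])]
      · rw [if_neg h3, if_neg]
        intro h
        apply h3
        rw [(pair_eq_pair h).1, Equiv.apply_symm_apply]
    · rw [if_neg h1, add_theta, if_neg]
      intro h
      exact h1 (pair_eq_pair h).2

end Aux
section Aux2

open Brandt

variable {n : ℕ}

lemma nMap_add_nMap (p q p' q' : Fin n) (σ σ' : Equiv.Perm (Fin n)) :
    nMap p q σ + nMap p' q' σ' =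
      if p = p' then sMap (σ'.symm q) p (pair (σ (σ'.symm q)) q') else xi (theta n) := by
  by_cases hp : p = p'
  · subst hp
    rw [if_pos rfl]
    funext a
    cases a with
    | none =>
      show theta n + theta n = sMap (σ'.symm q) p (pair (σ (σ'.symm q)) q') (theta n)
      rw [theta_add, sMap_apply_theta]
    | some x =>
      obtain ⟨i, j⟩ := x
      show nMap p q σ (pair i j) + nMap p q' σ' (pair i j) =
        sMap (σ'.symm q) p (pair (σ (σ'.symm q)) q') (pair i j)
      rw [nMap_apply_pair, nMap_apply_pair, sMap_apply_pair]
      by_cases h1 : j = p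
      · rw [if_pos h1, if_pos h1, pair_add_pair]
        by_cases h3 : q = σ' i
        · have hi : i = σ'.symm q := by rw [h3, Equiv.symm_apply_apply]
          rw [if_pos h3, if_pos (by rw [hi, h1]), hi]
        · rw [if_neg h3, if_neg]
          intro h
          apply h3
          rw [(pair_eq_pair h).1, Equiv.apply_symm_apply]
      · rw [if_neg h1, theta_add, if_neg]
        intro h
        exact h1 (pair_eq_pair h).2
  · rw [if_neg hp]
    funext a
    cases a with
    | none => show theta n + theta n = theta n; exact theta_add _
    | some x =>
      obtain ⟨i, j⟩ := x
      show nMap p q σ (pair i j) + nMap p' q' σ' (pair i j) = theta n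
      rw [nMap_apply_pair, nMap_apply_pair]
      by_cases h1 : j = p
      · rw [if_pos h1, if_neg (h1 ▸ hp), add_theta]
      · rw [if_neg h1, theta_add]

/-- The automorphism of `B_n` associated to a permutation. -/
def autmap (σ : Equiv.Perm (Fin n)) : MB n := fun a =>
  Option.elim (α := Fin n × Fin n) a (Brandt.theta n)
    (fun x => Brandt.pair (σ x.1) (σ x.2))

lemma autmap_apply_pair (σ : Equiv.Perm (Fin n)) (i j : Fin n) :
    autmap σ (pair i j) = pair (σ i) (σ j) := rfl

lemma autmap_apply_theta (σ : Equiv.Perm (Fin n)) : autmap σ (theta n) = theta n := rfl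

lemma autmap_isEndo (σ : Equiv.Perm (Fin n)) : IsEndo (autmap σ) := by
  intro a b
  cases a with
  | none =>
    show autmap σ (theta n + b) = autmap σ (theta n) + autmap σ b
    rw [theta_add, autmap_apply_theta, theta_add]
  | some x =>
    obtain ⟨i, j⟩ := x
    cases b with
    | none =>
      show autmap σ (pair i j + theta n) = autmap σ (pair i j) + autmap σ (theta n)
      rw [add_theta, autmap_apply_theta, add_theta]
    | some y =>
      obtain ⟨k, l⟩ := y
      show autmap σ (pair i j + pair k l) = autmap σ (pair i j) + autmap σ (pair k l)
      rw [pair_add_pair, autmap_apply_pair, autmap_apply_pair, pair_add_pair]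
      by_cases h : j = k
      · rw [if_pos h, if_pos (by rw [h]), autmap_apply_pair]
      · rw [if_neg h, if_neg (fun hh => h (σ.injective hh)), autmap_apply_theta]

lemma xi_pair_diag_isEndo (e : Fin n) : IsEndo (xi (pair (n := n) e e)) := by
  intro a b
  show pair e e = pair e e + pair e e
  rw [pair_add_pair, if_pos rfl]

lemma xi_theta_isEndo : IsEndo (xi (theta n)) := by
  intro a b
  show theta n = theta n + theta n
  rw [theta_add]

lemma autmap_add_xi (σ : Equiv.Perm (Fin n)) (u v : Fin n) :
    autmap σ + xi (pair u v) = nMap (σ.symm u) v σ := by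
  funext a
  cases a with
  | none =>
    show theta n + pair u v = nMap (σ.symm u) v σ (theta n)
    rw [theta_add, nMap_apply_theta]
  | some x =>
    obtain ⟨i, j⟩ := x
    show autmap σ (pair i j) + pair u v = nMap (σ.symm u) v σ (pair i j)
    rw [autmap_apply_pair, nMap_apply_pair, pair_add_pair]
    by_cases h : σ j = u
    · have hj : j = σ.symm u := by rw [← h, Equiv.symm_apply_apply]
      rw [if_pos h, if_pos hj]
    · rw [if_neg h, if_neg (fun hh => h (by rw [hh, Equiv.apply_symm_apply]))]

end Aux2
section Aux3

open Brandt

variable {n : ℕ}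

/-- Classification of endomorphisms of `B_n` (for `n ≥ 1`). -/
lemma endo_classification (hn : 1 ≤ n) (g : MB n) (hg : IsEndo g) :
    (∃ e : Fin n, g = xi (pair e e)) ∨ g = xi (theta n) ∨
      ∃ σ : Equiv.Perm (Fin n), g = autmap σ := by
  have i0 : Fin n := ⟨0, hn⟩
  have hidem : g (theta n) + g (theta n) = g (theta n) := by
    have := hg (theta n) (theta n)
    rw [theta_add] at this
    exact this.symm
  rcases hgθ : g (theta n) with _ | ⟨x, y⟩
  · -- g θ = θ
    by_cases hz : ∃ i j : Fin n, g (pair i j) = theta n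
    · -- g is the zero map
      right; left
      obtain ⟨i, j, hij⟩ := hz
      have key : ∀ k l : Fin n, g (pair k l) = theta n := by
        intro k l
        have e1 : (pair k i + pair i j : Brandt n) = pair k j := by
          rw [pair_add_pair, if_pos rfl]
        have e2 : (pair k j + pair j l : Brandt n) = pair k l := by
          rw [pair_add_pair, if_pos rfl]
        have h2 := hg (pair k j) (pair j l)
        rw [e2] at h2
        have h1 := hg (pair k i) (pair i j)
        rw [e1, hij, add_theta] at h1
        rw [h2, h1, theta_add]
      funext a
      rcases a with _ | ⟨k, l⟩
      · exact hgθ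
      · exact key k l
    · -- g never sends a pair to θ
      right; right
      push_neg at hz
      -- extract components
      have comp : ∀ i j : Fin n, ∃ x y : Fin n, g (pair i j) = pair x y := by
        intro i j
        rcases h : g (pair i j) with _ | ⟨x, y⟩
        · exact absurd h (hz i j)
        · exact ⟨x, y, rfl⟩
      choose φ ψ hφψ using comp
      -- additivity on composable pairs
      have hadd : ∀ i j k : Fin n, ψ i j = φ j k ∧ φ i k = φ i j ∧ ψ i k = ψ j k := by
        intro i j k
        have := hg (pair i j) (pair j k)
        rw [pair_add_pair, if_pos rfl, hφψ, hφψ, hφψ, pair_add_pair] at this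
        by_cases h : ψ i j = φ j k
        · rw [if_pos h] at this
          obtain ⟨h1, h2⟩ := pair_eq_pair this
          exact ⟨h, h1, h2⟩
        · rw [if_neg h] at this
          exact absurd this (pair_ne_theta _ _)
      set β : Fin n → Fin n := fun j => ψ i0 j with hβ
      have hψ : ∀ i j, ψ i j = β j := fun i j => ((hadd i0 i j).2.2).symm ▸ rfl
      have hφ : ∀ i j, φ i j = β i := by
        intro i j
        have h1 : φ i j = φ i i := (hadd i i j).2.1.symm ▸ (hadd i j j).2.1
        have h2 : ψ i0 i = φ i i := (hadd i0 i i).1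
        rw [h1, ← h2]
      have hβinj : Function.Injective β := by
        intro j k hjk
        by_contra hne
        have := hg (pair i0 j) (pair k i0)
        rw [pair_add_pair, if_neg hne, hgθ, hφψ, hφψ, pair_add_pair,
          hψ, hφ] at this
        rw [if_pos hjk] at this
        exact pair_ne_theta _ _ this.symm
      obtain ⟨σ, hσ⟩ : ∃ σ : Equiv.Perm (Fin n), ∀ x, σ x = β x := by
        have hbij := (Finite.injective_iff_bijective).mp hβinj
        exact ⟨Equiv.ofBijective β hbij, fun x => rfl⟩
      refine ⟨σ, ?_⟩
      funext a
      rcases a with _ | ⟨i, j⟩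
      · exact hgθ
      · show g (pair i j) = autmap σ (pair i j)
        rw [hφψ, autmap_apply_pair, hσ, hσ, hφ, hψ]
  · -- g θ = (x, y), an idempotent, so x = y
    left
    have hxy : y = x := by
      rw [hgθ] at hidem
      have hid2 : (pair x y : Brandt n) + pair x y = pair x y := hidem
      rw [pair_add_pair] at hid2
      by_cases h : y = x
      · exact h
      · rw [if_neg h] at hid2
        exact absurd hid2.symm (pair_ne_theta _ _)
    subst hxy
    refine ⟨y, ?_⟩
    funext a
    show g a = pair y y
    have h1 := hg a (theta n)
    rw [add_theta, hgθ] at h1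
    rcases h : g a with _ | ⟨u, v⟩
    · exfalso
      rw [h] at h1
      have h2 : (theta n : Brandt n) + pair y y = theta n := theta_add _
      exact pair_ne_theta y y (h1.trans h2)
    · rw [h] at h1
      have h1' : (pair y y : Brandt n) = pair u v + pair y y := h1
      rw [pair_add_pair] at h1'
      by_cases hv : v = y
      · rw [if_pos hv] at h1'
        obtain ⟨h2, _⟩ := pair_eq_pair h1'.symm
        rw [hv, h2]
        rfl
      · rw [if_neg hv] at h1'
        exact absurd h1' (pair_ne_theta _ _)

end Aux3
section Aux4

open Brandt

variable {n : ℕ}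

/-- The constants. -/
def CSet (n : ℕ) : Set (MB n) := Set.range (xi : Brandt n → MB n)

/-- The `n`-support maps. -/
def NSet (n : ℕ) : Set (MB n) := {f | ∃ p q σ, f = nMap p q σ}

/-- The (nonzero) singleton-support maps. -/
def SingSet (n : ℕ) : Set (MB n) := {f | ∃ k l u v, f = sMap k l (pair u v)}

/-- The candidate description of `A⁺(B_n)`. -/
def KSet (n : ℕ) : Set (MB n) := CSet n ∪ NSet n ∪ SingSet n

lemma xi_mem_K (c : Brandt n) : xi c ∈ KSet n := Or.inl (Or.inl ⟨c, rfl⟩)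

lemma nMap_mem_K (p q : Fin n) (σ : Equiv.Perm (Fin n)) : nMap p q σ ∈ KSet n :=
  Or.inl (Or.inr ⟨p, q, σ, rfl⟩)

lemma sMap_mem_K (k l : Fin n) (α : Brandt n) : sMap k l α ∈ KSet n := by
  rcases α with _ | ⟨u, v⟩
  · rw [show (none : Brandt n) = theta n from rfl, sMap_theta]
    exact xi_mem_K _
  · exact Or.inr ⟨k, l, u, v, rfl⟩

lemma K_add {f g : MB n} (hf : f ∈ KSet n) (hg : g ∈ KSet n) : f + g ∈ KSet n := by
  -- first dispatch the cases where one of them is a singleton-support map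
  rcases hg with hg | ⟨k, l, u, v, rfl⟩
  swap
  · rw [add_sMap]; exact sMap_mem_K _ _ _
  rcases hf with hf | ⟨k, l, u, v, rfl⟩
  swap
  · rw [sMap_add]; exact sMap_mem_K _ _ _
  rcases hf with ⟨c, rfl⟩ | ⟨p, q, σ, rfl⟩
  · rcases hg with ⟨d, rfl⟩ | ⟨p, q, σ, rfl⟩
    · rw [xi_add_xi]; exact xi_mem_K _
    · rcases c with _ | ⟨u, v⟩
      · rw [show (none : Brandt n) = theta n from rfl, xi_theta_add]
        exact xi_mem_K _
      · rw [show (some (u, v) : Brandt n) = pair u v from rfl, xi_add_nMap]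
        exact sMap_mem_K _ _ _
  · rcases hg with ⟨d, rfl⟩ | ⟨p', q', σ', rfl⟩
    · rcases d with _ | ⟨u, v⟩
      · rw [show (none : Brandt n) = theta n from rfl, add_xi_theta]
        exact xi_mem_K _
      · rw [show (some (u, v) : Brandt n) = pair u v from rfl, nMap_add_xi]
        split_ifs
        · exact nMap_mem_K _ _ _
        · exact xi_mem_K _
    · rw [nMap_add_nMap]
      split_ifs
      · exact sMap_mem_K _ _ _
      · exact xi_mem_K _

/-- `KSet` as an additive subsemigroup. -/
def Ksub (n : ℕ) : AddSubsemigroup (MB n) where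
  carrier := KSet n
  add_mem' := K_add

lemma affine_mem_K (hn : 1 ≤ n) {f : MB n} (hf : IsAffine f) : f ∈ KSet n := by
  obtain ⟨g, c, hg, rfl⟩ := hf
  rcases endo_classification hn g hg with ⟨e, rfl⟩ | rfl | ⟨σ, rfl⟩
  · rw [xi_add_xi]; exact xi_mem_K _
  · rw [xi_theta_add]; exact xi_mem_K _
  · rcases c with _ | ⟨u, v⟩
    · rw [show (none : Brandt n) = theta n from rfl, add_xi_theta]
      exact xi_mem_K _
    · rw [show (some (u, v) : Brandt n) = pair u v from rfl, autmap_add_xi]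
      exact nMap_mem_K _ _ _

lemma xi_isAffine (c : Brandt n) : IsAffine (xi c) := by
  rcases c with _ | ⟨u, v⟩
  · refine ⟨xi (theta n), theta n, xi_theta_isEndo, ?_⟩
    rw [xi_add_xi, theta_add]
    rfl
  · refine ⟨xi (pair u u), pair u v, xi_pair_diag_isEndo u, ?_⟩
    rw [xi_add_xi, pair_add_pair, if_pos rfl]
    rfl

lemma nMap_isAffine (p q : Fin n) (σ : Equiv.Perm (Fin n)) : IsAffine (nMap p q σ) := by
  refine ⟨autmap σ, pair (σ p) q, autmap_isEndo σ, ?_⟩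
  rw [autmap_add_xi, Equiv.symm_apply_apply]

lemma one_symm_apply (k : Fin n) : (1 : Equiv.Perm (Fin n)).symm k = k := rfl

lemma sMap_eq_sum (k l u v : Fin n) :
    sMap k l (pair (n := n) u v) = xi (pair u k) + nMap l v 1 := by
  rw [xi_add_nMap, one_symm_apply]

lemma xi_mem_Aplus (c : Brandt n) : xi c ∈ Aplus n :=
  AddSubsemigroup.subset_closure (xi_isAffine c)

lemma nMap_mem_Aplus (p q : Fin n) (σ : Equiv.Perm (Fin n)) : nMap p q σ ∈ Aplus n :=
  AddSubsemigroup.subset_closure (nMap_isAffine p q σ)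

lemma K_sub_Aplus : KSet n ⊆ AplusSet n := by
  rintro f (hf | ⟨k, l, u, v, rfl⟩)
  · rcases hf with ⟨c, rfl⟩ | ⟨p, q, σ, rfl⟩
    · exact xi_mem_Aplus c
    · exact nMap_mem_Aplus p q σ
  · rw [sMap_eq_sum]
    exact AddSubsemigroup.add_mem _ (xi_mem_Aplus _) (nMap_mem_Aplus _ _ _)

lemma AplusSet_eq_K (hn : 1 ≤ n) : AplusSet n = KSet n := by
  apply Set.Subset.antisymm _ K_sub_Aplus
  have : Aplus n ≤ Ksub n := by
    rw [Aplus, AddSubsemigroup.closure_le]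
    exact fun f hf => affine_mem_K hn hf
  exact this

end Aux4
section Aux5

open Brandt

variable {n : ℕ}

lemma nMap_param_injective (hn : 1 ≤ n) :
    Function.Injective
      (fun t : (Fin n × Fin n) × Equiv.Perm (Fin n) => nMap t.1.1 t.1.2 t.2) := by
  rintro ⟨⟨p, q⟩, σ⟩ ⟨⟨p', q'⟩, σ'⟩ h
  simp only at h
  have i0 : Fin n := ⟨0, hn⟩
  have hp : p = p' := by
    by_contra hne
    have := congrFun h (pair i0 p)
    rw [nMap_apply_pair, nMap_apply_pair, if_pos rfl, if_neg hne] at this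
    exact pair_ne_theta _ _ this
  subst hp
  have hq : q = q' ∧ σ i0 = σ' i0 := by
    have := congrFun h (pair i0 p)
    rw [nMap_apply_pair, nMap_apply_pair, if_pos rfl, if_pos rfl] at this
    obtain ⟨h1, h2⟩ := pair_eq_pair this
    exact ⟨h2, h1⟩
  have hσ : σ = σ' := by
    apply Equiv.ext
    intro i
    have := congrFun h (pair i p)
    rw [nMap_apply_pair, nMap_apply_pair, if_pos rfl, if_pos rfl] at this
    exact (pair_eq_pair this).1
  rw [hq.1, hσ]

lemma sMap_param_injective :
    Function.Injective
      (fun t : (Fin n × Fin n) × (Fin n × Fin n) =>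
        sMap t.1.1 t.1.2 (pair (n := n) t.2.1 t.2.2)) := by
  rintro ⟨⟨k, l⟩, ⟨u, v⟩⟩ ⟨⟨k', l'⟩, ⟨u', v'⟩⟩ h
  simp only at h
  have h1 := congrFun h (pair k l)
  rw [sMap_apply_pair, sMap_apply_pair, if_pos rfl] at h1
  by_cases h2 : pair (n := n) k l = pair k' l'
  · rw [if_pos h2] at h1
    obtain ⟨hk, hl⟩ := pair_eq_pair h2
    obtain ⟨hu, hv⟩ := pair_eq_pair h1
    rw [hk, hl, hu, hv]
  · rw [if_neg h2] at h1
    exact absurd h1 (pair_ne_theta _ _)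

lemma CSet_eq_image : CSet n = (xi : Brandt n → MB n) '' Set.univ := by
  rw [Set.image_univ]; rfl

lemma NSet_eq_image :
    NSet n = (fun t : (Fin n × Fin n) × Equiv.Perm (Fin n) => nMap t.1.1 t.1.2 t.2) ''
      Set.univ := by
  ext f
  constructor
  · rintro ⟨p, q, σ, rfl⟩
    exact ⟨⟨⟨p, q⟩, σ⟩, Set.mem_univ _, rfl⟩
  · rintro ⟨⟨⟨p, q⟩, σ⟩, -, rfl⟩
    exact ⟨p, q, σ, rfl⟩

lemma SingSet_eq_image :
    SingSet n = (fun t : (Fin n × Fin n) × (Fin n × Fin n) =>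
      sMap t.1.1 t.1.2 (pair (n := n) t.2.1 t.2.2)) '' Set.univ := by
  ext f
  constructor
  · rintro ⟨k, l, u, v, rfl⟩
    exact ⟨⟨⟨k, l⟩, ⟨u, v⟩⟩, Set.mem_univ _, rfl⟩
  · rintro ⟨⟨⟨k, l⟩, ⟨u, v⟩⟩, -, rfl⟩
    exact ⟨k, l, u, v, rfl⟩

lemma card_Brandt : Nat.card (Brandt n) = n ^ 2 + 1 := by
  rw [Nat.card_eq_fintype_card]
  have : Fintype.card (Brandt n) = Fintype.card (Option (Fin n × Fin n)) := rfl
  rw [this, Fintype.card_option, Fintype.card_prod, Fintype.card_fin]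
  ring

lemma CSet_ncard : (CSet n).ncard = n ^ 2 + 1 := by
  rw [CSet_eq_image, Set.ncard_image_of_injective _ xi_injective, Set.ncard_univ,
    card_Brandt]

lemma NSet_ncard (hn : 1 ≤ n) : (NSet n).ncard = n ^ 2 * n.factorial := by
  rw [NSet_eq_image, Set.ncard_image_of_injective _ (nMap_param_injective hn),
    Set.ncard_univ, Nat.card_eq_fintype_card, Fintype.card_prod, Fintype.card_prod,
    Fintype.card_perm, Fintype.card_fin]
  ring

lemma SingSet_ncard : (SingSet n).ncard = n ^ 4 := by
  rw [SingSet_eq_image, Set.ncard_image_of_injective _ sMap_param_injective,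
    Set.ncard_univ, Nat.card_eq_fintype_card]
  simp [Fintype.card_prod, Fintype.card_fin]
  ring

lemma CSet_disj_NSet (hn : 1 ≤ n) : Disjoint (CSet n) (NSet n) := by
  rw [Set.disjoint_left]
  rintro f ⟨c, rfl⟩ ⟨p, q, σ, hf⟩
  have i0 : Fin n := ⟨0, hn⟩
  have h1 : c = theta n := congrFun hf (theta n)
  have h2 := congrFun hf (pair i0 p)
  rw [nMap_apply_pair, if_pos rfl, xi_apply, h1] at h2
  exact pair_ne_theta _ _ h2.symm

lemma CSet_disj_SingSet : Disjoint (CSet n) (SingSet n) := by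
  rw [Set.disjoint_left]
  rintro f ⟨c, rfl⟩ ⟨k, l, u, v, hf⟩
  have h1 : c = theta n := by
    have := congrFun hf (theta n)
    rw [sMap_apply_theta] at this
    exact this
  have h2 := congrFun hf (pair k l)
  rw [sMap_apply_pair, if_pos rfl, xi_apply, h1] at h2
  exact pair_ne_theta _ _ h2.symm

lemma NSet_disj_SingSet (hn : 2 ≤ n) : Disjoint (NSet n) (SingSet n) := by
  rw [Set.disjoint_left]
  rintro f ⟨p, q, σ, rfl⟩ ⟨k, l, u, v, hf⟩
  obtain ⟨i0, i1, hne⟩ : ∃ i0 i1 : Fin n, i0 ≠ i1 :=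
    ⟨⟨0, by omega⟩, ⟨1, by omega⟩, by simp [Fin.ext_iff]⟩
  have key : ∀ i : Fin n, i = k := by
    intro i
    have := congrFun hf (pair i p)
    rw [nMap_apply_pair, if_pos rfl, sMap_apply_pair] at this
    by_cases h2 : pair (n := n) i p = pair k l
    · exact (pair_eq_pair h2).1
    · rw [if_neg h2] at this
      exact absurd this (pair_ne_theta _ _)
  exact hne ((key i0).trans (key i1).symm)

lemma KSet_ncard (hn : 2 ≤ n) :
    (KSet n).ncard = (n ^ 2 + 1) + n ^ 2 * n.factorial + n ^ 4 := by
  have hn1 : 1 ≤ n := by omega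
  rw [KSet, Set.ncard_union_eq, Set.ncard_union_eq (CSet_disj_NSet hn1),
    CSet_ncard, NSet_ncard hn1, SingSet_ncard]
  · rw [Set.disjoint_union_left]
    exact ⟨CSet_disj_SingSet, NSet_disj_SingSet hn⟩

end Aux5
section Aux6

open Brandt

variable {n : ℕ}

lemma const_mem_closure (hn : 2 ≤ n) {U : Set (MB n)} (hU : U ⊆ KSet n)
    (hM : (KSet n \ U).ncard ≤ n - 2) (c : Brandt n) :
    xi c ∈ AddSubsemigroup.closure U := by
  classical
  have key : ∀ i k : Fin n, xi (pair i k) ∈ AddSubsemigroup.closure U := by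
    intro i k
    by_contra hc
    have hik_M : xi (pair (n := n) i k) ∈ KSet n \ U :=
      ⟨xi_mem_K _, fun hU' => hc (AddSubsemigroup.subset_closure hU')⟩
    have hblock : ∀ j : Fin n, j ≠ i → j ≠ k →
        (xi (pair (n := n) i j) ∈ KSet n \ U ∨ xi (pair (n := n) j k) ∈ KSet n \ U) := by
      intro j hji hjk
      by_contra hcon
      push_neg at hcon
      obtain ⟨h1, h2⟩ := hcon
      have hu1 : xi (pair (n := n) i j) ∈ U := by
        by_contra h; exact h1 ⟨xi_mem_K _, h⟩
      have hu2 : xi (pair (n := n) j k) ∈ U := by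
        by_contra h; exact h2 ⟨xi_mem_K _, h⟩
      apply hc
      have hsum : xi (pair (n := n) i j) + xi (pair j k) = xi (pair i k) := by
        rw [xi_add_xi, pair_add_pair, if_pos rfl]
      rw [← hsum]
      exact AddSubsemigroup.add_mem _ (AddSubsemigroup.subset_closure hu1)
        (AddSubsemigroup.subset_closure hu2)
    set T : Set (Fin n) := {j | j ≠ i ∧ j ≠ k} with hT
    set F : Fin n → MB n := fun j =>
      if xi (pair (n := n) i j) ∈ KSet n \ U then xi (pair (n := n) i j)
      else xi (pair (n := n) j k) with hF
    have hmaps : ∀ j ∈ T, F j ∈ (KSet n \ U) \ {xi (pair (n := n) i k)} := by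
      rintro j ⟨hji, hjk⟩
      by_cases h : xi (pair (n := n) i j) ∈ KSet n \ U
      · refine ⟨by rw [hF]; simpa [h] using h, ?_⟩
        simp only [Set.mem_singleton_iff, hF]
        rw [if_pos h]
        intro heq
        exact hjk (pair_eq_pair (xi_injective heq)).2
      · have h2 := (hblock j hji hjk).resolve_left h
        refine ⟨by rw [hF]; simpa [h] using h2, ?_⟩
        simp only [Set.mem_singleton_iff, hF]
        rw [if_neg h]
        intro heq
        exact hji (pair_eq_pair (xi_injective heq)).1
    have hinj : Set.InjOn F T := by
      rintro j ⟨hji, hjk⟩ j' ⟨hji', hjk'⟩ heq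
      simp only [hF] at heq
      by_cases h : xi (pair (n := n) i j) ∈ KSet n \ U <;>
        by_cases h' : xi (pair (n := n) i j') ∈ KSet n \ U
      · rw [if_pos h, if_pos h'] at heq
        exact (pair_eq_pair (xi_injective heq)).2
      · rw [if_pos h, if_neg h'] at heq
        exact absurd (pair_eq_pair (xi_injective heq)).1.symm hji'
      · rw [if_neg h, if_pos h'] at heq
        exact absurd (pair_eq_pair (xi_injective heq)).1 hji
      · rw [if_neg h, if_neg h'] at heq
        exact (pair_eq_pair (xi_injective heq)).1
    have hTcard : n ≤ 2 + T.ncard := by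
      have cover : (Set.univ : Set (Fin n)) ⊆ ({i, k} : Set (Fin n)) ∪ T := by
        intro j _
        by_cases h1 : j = i
        · exact Or.inl (Or.inl h1)
        · by_cases h2 : j = k
          · exact Or.inl (Or.inr h2)
          · exact Or.inr ⟨h1, h2⟩
      have h1 : (Set.univ : Set (Fin n)).ncard ≤ (({i, k} : Set (Fin n)) ∪ T).ncard :=
        Set.ncard_le_ncard cover (Set.toFinite _)
      have h2 : (({i, k} : Set (Fin n)) ∪ T).ncard ≤ ({i, k} : Set (Fin n)).ncard + T.ncard :=
        Set.ncard_union_le _ _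
      have h3 : ({i, k} : Set (Fin n)).ncard ≤ 2 := by
        have := Set.ncard_insert_le i ({k} : Set (Fin n))
        rw [Set.ncard_singleton] at this
        omega
      rw [Set.ncard_univ, Nat.card_eq_fintype_card, Fintype.card_fin] at h1
      omega
    have hMne : 1 ≤ (KSet n \ U).ncard :=
      (Set.ncard_pos (Set.toFinite _)).mpr ⟨_, hik_M⟩
    have hM3 : ((KSet n \ U) \ {xi (pair (n := n) i k)}).ncard ≤ n - 3 := by
      rw [Set.ncard_diff_singleton_of_mem hik_M]
      omega
    have hle : T.ncard ≤ ((KSet n \ U) \ {xi (pair (n := n) i k)}).ncard :=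
      Set.ncard_le_ncard_of_injOn F hmaps hinj (Set.toFinite _)
    omega
  rcases c with _ | ⟨u, v⟩
  · obtain ⟨i0, i1, hne⟩ : ∃ i0 i1 : Fin n, i1 ≠ i0 :=
      ⟨⟨0, by omega⟩, ⟨1, by omega⟩, by simp [Fin.ext_iff]⟩
    have hsum : xi (pair (n := n) i0 i1) + xi (pair i0 i1) = xi (theta n) := by
      rw [xi_add_xi, pair_add_pair, if_neg hne]
    have := AddSubsemigroup.add_mem _ (key i0 i1) (key i0 i1)
    rw [hsum] at this
    exact this
  · exact key u v

lemma nMap_mem_closure (hn : 2 ≤ n) {U : Set (MB n)} (hU : U ⊆ KSet n)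
    (hM : (KSet n \ U).ncard ≤ n - 2) (p q : Fin n) (σ : Equiv.Perm (Fin n)) :
    nMap p q σ ∈ AddSubsemigroup.closure U := by
  obtain ⟨u, hu⟩ : ∃ u : Fin n, nMap p u σ ∈ U := by
    by_contra hcon
    push_neg at hcon
    have hmaps : ∀ u : Fin n, (fun u : Fin n => nMap p u σ) u ∈ KSet n \ U :=
      fun u => ⟨nMap_mem_K _ _ _, hcon u⟩
    have hinj : Set.InjOn (fun u : Fin n => nMap p u σ) Set.univ := by
      intro u _ u' _ h
      have h2 := nMap_param_injective (n := n) (by omega)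
        (a₁ := ((p, u), σ)) (a₂ := ((p, u'), σ)) h
      have h3 : (p, u) = (p, u') := congrArg Prod.fst h2
      exact (Prod.mk.injEq .. ▸ h3).2
    have hle : (Set.univ : Set (Fin n)).ncard ≤ (KSet n \ U).ncard :=
      Set.ncard_le_ncard_of_injOn _ (fun u _ => hmaps u) hinj (Set.toFinite _)
    rw [Set.ncard_univ, Nat.card_eq_fintype_card, Fintype.card_fin] at hle
    omega
  have hsum : nMap p u σ + xi (pair u q) = nMap p q σ := by
    rw [nMap_add_xi, if_pos rfl]
  rw [← hsum]
  exact AddSubsemigroup.add_mem _ (AddSubsemigroup.subset_closure hu)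
    (const_mem_closure hn hU hM _)

lemma gen_of_small_complement (hn : 2 ≤ n) {U : Set (MB n)} (hU : U ⊆ KSet n)
    (hM : (KSet n \ U).ncard ≤ n - 2) :
    (AddSubsemigroup.closure U : Set (MB n)) = AplusSet n := by
  rw [AplusSet_eq_K (by omega)]
  apply Set.Subset.antisymm
  · have : AddSubsemigroup.closure U ≤ Ksub n := (AddSubsemigroup.closure_le).2 hU
    exact this
  · rintro f (hf | ⟨k, l, u, v, rfl⟩)
    · rcases hf with ⟨c, rfl⟩ | ⟨p, q, σ, rfl⟩
      · exact const_mem_closure hn hU hM c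
      · exact nMap_mem_closure hn hU hM p q σ
    · rw [sMap_eq_sum]
      exact AddSubsemigroup.add_mem _ (const_mem_closure hn hU hM _)
        (nMap_mem_closure hn hU hM _ _ _)

/-- The set of maps removed to form the maximal proper subsemigroup. -/
def DSet (n : ℕ) (i0 : Fin n) : Set (MB n) :=
  (fun j => xi (pair (n := n) i0 j)) '' {j | j ≠ i0}

lemma DSet_sub_K (i0 : Fin n) : DSet n i0 ⊆ KSet n := by
  rintro f ⟨j, -, rfl⟩
  exact xi_mem_K _

lemma K_theta_ne {f : MB n} (hf : f ∈ KSet n) (h : f (theta n) ≠ theta n) :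
    f = xi (f (theta n)) := by
  rcases hf with (⟨c, rfl⟩ | ⟨p, q, σ, rfl⟩) | ⟨k, l, u, v, rfl⟩
  · rfl
  · exact absurd (nMap_apply_theta p q σ) h
  · exact absurd (sMap_apply_theta k l _) h

lemma V_add (i0 : Fin n) {f g : MB n} (hf : f ∈ KSet n \ DSet n i0)
    (hg : g ∈ KSet n \ DSet n i0) : f + g ∈ KSet n \ DSet n i0 := by
  refine ⟨K_add hf.1 hg.1, ?_⟩
  rintro ⟨j, hj, hsum⟩
  -- both f and g are non-theta constants
  have hfθ : f (theta n) ≠ theta n := by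
    intro h
    have := congrFun hsum.symm (theta n)
    rw [MB_add_apply, h, theta_add] at this
    exact pair_ne_theta _ _ this.symm
  have hgθ : g (theta n) ≠ theta n := by
    intro h
    have := congrFun hsum.symm (theta n)
    rw [MB_add_apply, h, add_theta] at this
    exact pair_ne_theta _ _ this.symm
  have hfc := K_theta_ne hf.1 hfθ
  have hgc := K_theta_ne hg.1 hgθ
  rcases hc : f (theta n) with _ | ⟨a, b⟩
  · exact hfθ hc
  rcases hd : g (theta n) with _ | ⟨e, w⟩
  · exact hgθ hd
  rw [hc] at hfc
  rw [hd] at hgc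
  rw [hfc, hgc] at hsum
  replace hsum : (fun j => xi (pair (n := n) i0 j)) j = xi (pair a b + pair e w) := hsum
  have hcd : (pair (n := n) a b) + pair e w = pair i0 j := xi_injective hsum.symm
  rw [pair_add_pair] at hcd
  by_cases hbe : b = e
  · rw [if_pos hbe] at hcd
    obtain ⟨ha, hw⟩ := pair_eq_pair hcd
    -- f = xi (pair i0 b), not in DSet so b = i0
    have hb : b = i0 := by
      by_contra hbne
      refine hf.2 ⟨b, hbne, ?_⟩
      show (xi (pair i0 b) : MB n) = f
      rw [hfc, ha]
      rfl
    -- then g = xi (pair i0 j) ∈ DSet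
    refine hg.2 ⟨j, hj, ?_⟩
    show (xi (pair i0 j) : MB n) = g
    rw [hgc, ← hbe, hb, hw]
    rfl
  · rw [if_neg hbe] at hcd
    exact pair_ne_theta _ _ hcd.symm

/-- The maximal proper subsemigroup. -/
def Vsub (n : ℕ) (i0 : Fin n) : AddSubsemigroup (MB n) where
  carrier := KSet n \ DSet n i0
  add_mem' := V_add i0

lemma DSet_ncard_le (i0 : Fin n) : (DSet n i0).ncard ≤ n - 1 := by
  have h1 : (DSet n i0).ncard ≤ ({j : Fin n | j ≠ i0}).ncard :=
    Set.ncard_image_le (Set.toFinite _)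
  have h2 : ({j : Fin n | j ≠ i0}) = ({i0} : Set (Fin n))ᶜ := by
    ext j; simp
  have h3 := Set.ncard_add_ncard_compl ({i0} : Set (Fin n)) (Set.toFinite _) (Set.toFinite _)
  rw [Set.ncard_singleton, Nat.card_eq_fintype_card, Fintype.card_fin] at h3
  rw [h2] at h1
  omega

lemma VSet_ncard_ge (i0 : Fin n) :
    (KSet n).ncard - (n - 1) ≤ (KSet n \ DSet n i0).ncard := by
  rw [Set.ncard_diff (DSet_sub_K i0) (Set.toFinite _)]
  have := DSet_ncard_le (n := n) i0
  omega

end Aux6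
/-- For `n ≥ 2`, the large rank of `A⁺(Bₙ)` is
`r₅(A⁺(Bₙ)) = (n!)·n² + n² + n⁴ − n + 3`: it is the least `k` such that every
`k`-element subset of `A⁺(Bₙ)` generates `A⁺(Bₙ)`. -/
theorem stmt_19 (n : ℕ) (hn : 2 ≤ n) :
    IsLeast {k : ℕ | ∀ U : Set (MB n), U ⊆ AplusSet n → U.ncard = k →
      (AddSubsemigroup.closure U : Set (MB n)) = AplusSet n}
      (n.factorial * n ^ 2 + n ^ 2 + n ^ 4 - n + 3) := by
  have hn1 : 1 ≤ n := by omega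
  have hK := AplusSet_eq_K (n := n) hn1
  have hKcard := KSet_ncard (n := n) hn
  have hcomm : n.factorial * n ^ 2 = n ^ 2 * n.factorial := Nat.mul_comm _ _
  have h4 : n ≤ n ^ 4 := Nat.le_self_pow (by norm_num) n
  constructor
  · -- membership: every subset of this size generates
    intro U hU hcard
    have hUK : U ⊆ KSet n := hK ▸ hU
    have hMcard : (KSet n \ U).ncard ≤ n - 2 := by
      rw [Set.ncard_diff hUK (Set.toFinite _), hcard, hKcard, hcomm]
      omega
    exact gen_of_small_complement hn hUK hMcard
  · -- lower bound
    intro k hk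
    by_contra hlt
    push_neg at hlt
    obtain ⟨i0, i1, hne⟩ : ∃ i0 i1 : Fin n, i1 ≠ i0 :=
      ⟨⟨0, by omega⟩, ⟨1, by omega⟩, by simp [Fin.ext_iff]⟩
    have hVcard : k ≤ (KSet n \ DSet n i0).ncard := by
      have h1 := VSet_ncard_ge (n := n) i0
      rw [hKcard] at h1
      rw [hcomm] at hlt
      omega
    obtain ⟨U, hUV, hUcard⟩ := Set.exists_subset_card_eq hVcard
    have hUA : U ⊆ AplusSet n := by
      rw [hK]
      exact hUV.trans Set.diff_subset
    have hgen := hk U hUA hUcard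
    have hsub : (AddSubsemigroup.closure U : Set (MB n)) ⊆ KSet n \ DSet n i0 :=
      (AddSubsemigroup.closure_le (S := Vsub n i0)).2 hUV
    rw [hgen, hK] at hsub
    have hmem : xi (Brandt.pair (n := n) i0 i1) ∈ KSet n := xi_mem_K _
    have hD : xi (Brandt.pair (n := n) i0 i1) ∈ DSet n i0 := ⟨i1, hne, rfl⟩
    exact (hsub hmem).2 hD
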